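/- Let ζ ∈ ℂ with |ζ| = 1 and let u : ℕ → 𝔻 be a sequence converging to ζ. Then for every R > 0 the horosphere E_0(u, R) of u with respect to the Poincaré distance and base point 0 equals the classical horosphere E(ζ, R) := {z ∈ 𝔻 : |ζ − z|²/(1 − |z|²) < R}; in particular u is an admissible sequence with respect to the base point 0. -/

import Mathlib

/-!
With `A = ‖1 - conj w * z‖` and `B = ‖z - w‖`, the identity `A² - B² = (1 - ‖z‖²)(1 - ‖w‖²)`
turns `ρ(z, w) = artanh (B / A)` into `½ log ((A + B)² / ((1 - ‖z‖²)(1 - ‖w‖²)))`, hence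
`ρ(z, w) - ρ(0, w) = ½ log ((A + B)² / ((1 - ‖z‖²)(1 + ‖w‖)²))`. This expression stays continuous
in `w` up to the unit circle, and at `w = ζ` both `A` and `B` equal `‖ζ - z‖`. So along `u n → ζ`
the limsup defining `E_0(u, R)` is a genuine limit, `½ log (‖ζ - z‖² / (1 - ‖z‖²))`, and the
horosphere is the classical one; it contains the points `t ζ` for `t` close to `1`.
-/

open Filter Set

noncomputable section

/-- The inverse hyperbolic tangent: `artanh r = (1/2) log ((1+r)/(1-r))`. -/
def artanh (r : ℝ) : ℝ := (1 / 2) * Real.log ((1 + r) / (1 - r))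

/-- The Poincaré (Kobayashi) distance on the unit disc
`ρ(z,w) = artanh |(z - w)/(1 - conj w * z)|`. -/
def pd (z w : ℂ) : ℝ := artanh (Norm.norm ((z - w) / (1 - (starRingEnd ℂ) w * z)))

/-- The horosphere in the unit disc of a sequence `u` with respect to base point `x`
and radius `R`. -/
def discE (x : ℂ) (u : ℕ → ℂ) (R : ℝ) : Set ℂ :=
  {z : ℂ | Norm.norm z < 1 ∧
    Filter.limsup (fun n => pd z (u n) - pd x (u n)) Filter.atTop < (1 / 2) * Real.log R}

def classicalHorosphere (ζ : ℂ) (R : ℝ) : Set ℂ :=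
  {z : ℂ | ‖z‖ < 1 ∧ ‖ζ - z‖ ^ 2 / (1 - ‖z‖ ^ 2) < R}

lemma norm_one_sub_conj_mul_sq_sub_norm_sub_sq (z w : ℂ) :
    ‖1 - starRingEnd ℂ w * z‖ ^ 2 - ‖z - w‖ ^ 2 = (1 - ‖z‖ ^ 2) * (1 - ‖w‖ ^ 2) := by
  simp only [Complex.sq_norm, Complex.normSq_apply, Complex.mul_re, Complex.mul_im,
    Complex.sub_re, Complex.sub_im, Complex.conj_re, Complex.conj_im, Complex.one_re,
    Complex.one_im]
  ring

lemma norm_sub_lt_norm_one_sub_conj_mul {z w : ℂ} (hz : ‖z‖ < 1) (hw : ‖w‖ < 1) :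
    ‖z - w‖ < ‖1 - starRingEnd ℂ w * z‖ := by
  have hpos : 0 < (1 - ‖z‖ ^ 2) * (1 - ‖w‖ ^ 2) := by
    have := norm_nonneg z; have := norm_nonneg w
    exact mul_pos (by nlinarith) (by nlinarith)
  have := norm_one_sub_conj_mul_sq_sub_norm_sub_sq z w
  exact lt_of_pow_lt_pow_left₀ 2 (norm_nonneg _) (by linarith)

lemma norm_one_sub_conj_mul_of_norm_eq_one {ζ : ℂ} (hζ : ‖ζ‖ = 1) (z : ℂ) :
    ‖1 - starRingEnd ℂ ζ * z‖ = ‖ζ - z‖ := by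
  have hconj : starRingEnd ℂ ζ * ζ = 1 := by
    rw [← Complex.normSq_eq_conj_mul_self, ← Complex.sq_norm, hζ]; norm_num
  rw [← hconj, ← mul_sub, norm_mul, Complex.norm_conj, hζ, one_mul]

lemma sq_norm_sub_div_pos {ζ z : ℂ} (hζ : ‖ζ‖ = 1) (hz : ‖z‖ < 1) :
    0 < ‖ζ - z‖ ^ 2 / (1 - ‖z‖ ^ 2) := by
  have hζz : ζ - z ≠ 0 := sub_ne_zero.2 fun h => by simp [← h, hζ] at hz
  have hz2 : 0 < 1 - ‖z‖ ^ 2 := by have := norm_nonneg z; nlinarith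
  positivity

lemma artanh_div_eq_half_log {a b : ℝ} (hb : 0 ≤ b) (hba : b < a) :
    artanh (b / a) = 1 / 2 * Real.log ((a + b) ^ 2 / (a ^ 2 - b ^ 2)) := by
  have ha : 0 < a := hb.trans_lt hba
  have hab : a - b ≠ 0 := (sub_pos.2 hba).ne'
  have hab' : a + b ≠ 0 := by positivity
  rw [artanh, sq_sub_sq]
  congr 2
  field_simp

lemma pd_zero_left (w : ℂ) : pd 0 w = artanh ‖w‖ := by
  simp [pd]

lemma pd_eq_half_log {z w : ℂ} (hz : ‖z‖ < 1) (hw : ‖w‖ < 1) :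
    pd z w = 1 / 2 * Real.log
      ((‖1 - starRingEnd ℂ w * z‖ + ‖z - w‖) ^ 2 / ((1 - ‖z‖ ^ 2) * (1 - ‖w‖ ^ 2))) := by
  rw [pd, norm_div, artanh_div_eq_half_log (norm_nonneg _)
    (norm_sub_lt_norm_one_sub_conj_mul hz hw), norm_one_sub_conj_mul_sq_sub_norm_sub_sq]

lemma pd_sub_pd_zero {z w : ℂ} (hz : ‖z‖ < 1) (hw : ‖w‖ < 1) :
    pd z w - pd 0 w = 1 / 2 * Real.log
      ((‖1 - starRingEnd ℂ w * z‖ + ‖z - w‖) ^ 2 / ((1 - ‖z‖ ^ 2) * (1 + ‖w‖) ^ 2)) := by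
  have hz2 : 0 < 1 - ‖z‖ ^ 2 := by have := norm_nonneg z; nlinarith
  have hw1 : 0 < 1 - ‖w‖ := sub_pos.2 hw
  have hw1' : 0 < 1 + ‖w‖ := by positivity
  have hw2 : 0 < 1 - ‖w‖ ^ 2 := by nlinarith
  have hA : 0 < ‖1 - starRingEnd ℂ w * z‖ :=
    (norm_nonneg _).trans_lt (norm_sub_lt_norm_one_sub_conj_mul hz hw)
  rw [pd_eq_half_log hz hw, pd_zero_left, artanh, ← mul_sub,
    ← Real.log_div (by positivity) (by positivity)]
  congr 2
  field_simp
  ring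

lemma tendsto_pd_sub_pd_zero {ζ : ℂ} (hζ : ‖ζ‖ = 1) {u : ℕ → ℂ} (hu : ∀ n, ‖u n‖ < 1)
    (hconv : Tendsto u atTop (nhds ζ)) {z : ℂ} (hz : ‖z‖ < 1) :
    Tendsto (fun n => pd z (u n) - pd 0 (u n)) atTop
      (nhds (1 / 2 * Real.log (‖ζ - z‖ ^ 2 / (1 - ‖z‖ ^ 2)))) := by
  have hz2 : 0 < 1 - ‖z‖ ^ 2 := by have := norm_nonneg z; nlinarith
  have hlim : ‖ζ - z‖ ^ 2 / (1 - ‖z‖ ^ 2) =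
      (‖1 - starRingEnd ℂ ζ * z‖ + ‖z - ζ‖) ^ 2 / ((1 - ‖z‖ ^ 2) * (1 + ‖ζ‖) ^ 2) := by
    rw [norm_one_sub_conj_mul_of_norm_eq_one hζ, norm_sub_rev z, hζ]
    field_simp
  have hcont : ContinuousAt (fun w : ℂ =>
      (‖1 - starRingEnd ℂ w * z‖ + ‖z - w‖) ^ 2 / ((1 - ‖z‖ ^ 2) * (1 + ‖w‖) ^ 2)) ζ :=
    ContinuousAt.div (by fun_prop) (by fun_prop) (by rw [hζ]; positivity)
  rw [hlim]
  refine (((hcont.tendsto.comp hconv).log ?_).const_mul _).congr fun n => ?_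
  · exact hlim ▸ (sq_norm_sub_div_pos hζ hz).ne'
  · exact (pd_sub_pd_zero hz (hu n)).symm

lemma tendsto_artanh_nhdsLT_one : Tendsto artanh (nhdsWithin 1 (Iio 1)) atTop := by
  have hsub : Tendsto (fun r : ℝ => 1 - r) (nhdsWithin 1 (Iio 1)) (nhdsWithin 0 (Ioi 0)) := by
    refine tendsto_nhdsWithin_of_tendsto_nhds_of_eventually_within _ ?_
      (eventually_nhdsWithin_of_forall fun r hr => sub_pos.2 (mem_Iio.1 hr))
    simpa using ((continuous_sub_left (1 : ℝ)).tendsto 1).mono_left nhdsWithin_le_nhds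
  have hnum : Tendsto (fun r : ℝ => 1 + r) (nhdsWithin 1 (Iio 1)) (nhds 2) := by
    simpa [one_add_one_eq_two] using
      ((continuous_const_add (1 : ℝ)).tendsto 1).mono_left nhdsWithin_le_nhds
  have hratio : Tendsto (fun r : ℝ => (1 + r) / (1 - r)) (nhdsWithin 1 (Iio 1)) atTop := by
    simpa only [div_eq_mul_inv, Pi.inv_apply] using
      hnum.pos_mul_atTop two_pos hsub.inv_tendsto_nhdsGT_zero
  exact (Real.tendsto_log_atTop.comp hratio).const_mul_atTop one_half_pos

lemma tendsto_pd_zero_atTop {u : ℕ → ℂ} (hu : ∀ n, ‖u n‖ < 1)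
    (hnorm : Tendsto (fun n => ‖u n‖) atTop (nhds 1)) :
    Tendsto (fun n => pd 0 (u n)) atTop atTop := by
  simp only [pd_zero_left]
  exact tendsto_artanh_nhdsLT_one.comp
    (tendsto_nhdsWithin_iff.2 ⟨hnorm, Eventually.of_forall hu⟩)

lemma discE_zero_eq_classicalHorosphere {ζ : ℂ} (hζ : ‖ζ‖ = 1) {u : ℕ → ℂ}
    (hu : ∀ n, ‖u n‖ < 1) (hconv : Tendsto u atTop (nhds ζ)) {R : ℝ} (hR : 0 < R) :
    discE 0 u R = classicalHorosphere ζ R := by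
  ext z
  refine and_congr_right fun hz => ?_
  rw [(tendsto_pd_sub_pd_zero hζ hu hconv hz).limsup_eq, mul_lt_mul_iff_right₀ one_half_pos,
    Real.log_lt_log_iff (sq_norm_sub_div_pos hζ hz) hR]

lemma classicalHorosphere_nonempty {ζ : ℂ} (hζ : ‖ζ‖ = 1) {R : ℝ} (hR : 0 < R) :
    (classicalHorosphere ζ R).Nonempty := by
  set t : ℝ := 1 / (1 + R)
  have ht0 : 0 < t := by positivity
  have ht1 : t < 1 := (div_lt_one (by linarith)).2 (by linarith)
  have hnorm : ‖(t : ℂ) * ζ‖ = t := by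
    rw [norm_mul, hζ, mul_one, Complex.norm_real, Real.norm_of_nonneg ht0.le]
  have hdist : ‖ζ - (t : ℂ) * ζ‖ = 1 - t := by
    rw [← one_sub_mul, norm_mul, hζ, mul_one, ← Complex.ofReal_one, ← Complex.ofReal_sub,
      Complex.norm_real, Real.norm_of_nonneg (sub_pos.2 ht1).le]
  refine ⟨(t : ℂ) * ζ, by rw [hnorm]; exact ht1, ?_⟩
  -- the ratio is `(1 - t) / (1 + t) < 1 - t = R t`
  show ‖ζ - (t : ℂ) * ζ‖ ^ 2 / (1 - ‖(t : ℂ) * ζ‖ ^ 2) < R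
  rw [hdist, hnorm, div_lt_iff₀ (by nlinarith)]
  have hR' : 1 - t = R * t := by simp only [t]; field_simp; ring
  nlinarith

theorem discE_eq_classical_horosphere (ζ : ℂ) (hζ : Norm.norm ζ = 1)
    (u : ℕ → ℂ) (hu : ∀ n, Norm.norm (u n) < 1)
    (hconv : Filter.Tendsto u Filter.atTop (nhds ζ)) :
    (∀ R > (0 : ℝ), discE 0 u R =
      {z : ℂ | Norm.norm z < 1 ∧ (Norm.norm (ζ - z)) ^ 2 / (1 - (Norm.norm z) ^ 2) < R}) ∧
    (Filter.Tendsto (fun n => pd 0 (u n)) Filter.atTop Filter.atTop ∧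
      ∀ R > (0 : ℝ), (discE 0 u R).Nonempty) := by
  have hE : ∀ R > (0 : ℝ), discE 0 u R = classicalHorosphere ζ R := fun R hR =>
    discE_zero_eq_classicalHorosphere hζ hu hconv hR
  have hnorm : Tendsto (fun n => ‖u n‖) atTop (nhds 1) := hζ ▸ hconv.norm
  exact ⟨hE, tendsto_pd_zero_atTop hu hnorm,
    fun R hR => hE R hR ▸ classicalHorosphere_nonempty hζ hR⟩
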